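/- Let x be a variable of the polynomial ring R = k[x₁,…,xₙ] over a field k, and let I₁ and I₂ be monomial ideals of R generated by monomials not divisible by x, with I₂ ⊆ I₁. Then (xI₁) ∩ I₂ = xI₂. -/

import Mathlib

open MvPolynomial

namespace VD

variable {V : Type*} [DecidableEq V]

/-- A (abstract) simplicial complex: a collection of finite subsets closed under subsets. -/
def IsComplex (Δ : Set (Finset V)) : Prop := ∀ F ∈ Δ, ∀ G : Finset V, G ⊆ F → G ∈ Δ

/-- `F` is a facet (maximal face) of `Δ`. -/
def IsFacet (Δ : Set (Finset V)) (F : Finset V) : Prop :=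
  F ∈ Δ ∧ ∀ G ∈ Δ, F ⊆ G → F = G

/-- The deletion of the vertex `x` from `Δ`. -/
def del (Δ : Set (Finset V)) (x : V) : Set (Finset V) := {F | F ∈ Δ ∧ x ∉ F}

/-- The link of the vertex `x` in `Δ`. -/
def lk (Δ : Set (Finset V)) (x : V) : Set (Finset V) :=
  {F | F ∈ Δ ∧ x ∉ F ∧ insert x F ∈ Δ}

/-- `x` is a shedding vertex of `Δ`: every facet of the deletion is a facet of `Δ`. -/
def IsShedding (Δ : Set (Finset V)) (x : V) : Prop :=
  ∀ F : Finset V, IsFacet (del Δ x) F → IsFacet Δ F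

/-- Vertex decomposability of a simplicial complex. -/
inductive VertexDecomposable : Set (Finset V) → Prop
  | simplex (S : Finset V) : VertexDecomposable {F | F ⊆ S}
  | shed (Δ : Set (Finset V)) (x : V) (hxΔ : {x} ∈ Δ) (hx : IsShedding Δ x)
      (h1 : VertexDecomposable (del Δ x)) (h2 : VertexDecomposable (lk Δ x)) :
      VertexDecomposable Δ

/-- The Alexander dual simplicial complex `Δ^∨ = {X∖F : F ∉ Δ}` (on vertex set `V`). -/
def dualComplex [Fintype V] (Δ : Set (Finset V)) : Set (Finset V) :=
  {G : Finset V | Finset.univ \ G ∉ Δ}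

variable (k : Type*) [Field k]

/-- The squarefree monomial `∏_{i ∈ S} xᵢ`. -/
noncomputable def mon (S : Finset V) : MvPolynomial V k := ∏ i ∈ S, X i

/-- The Stanley–Reisner ideal of the Alexander dual of `Δ`:
generated by the monomials `x^{W∖F}`, `F` a facet of `Δ`, complements taken in
the vertex set `W`. -/
noncomputable def dualIdeal (W : Finset V) (Δ : Set (Finset V)) :
    Ideal (MvPolynomial V k) :=
  Ideal.span ((fun F => mon k (W \ F)) '' {F : Finset V | IsFacet Δ F})

/-- The Stanley–Reisner ideal of `Δ` (on vertex set `W`): generated by the monomials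
`x^F` for the non-faces `F ⊆ W` of `Δ`. -/
noncomputable def srIdeal (W : Finset V) (Δ : Set (Finset V)) : Ideal (MvPolynomial V k) :=
  Ideal.span ((fun F => mon k F) '' {F : Finset V | F ⊆ W ∧ F ∉ Δ})

/-- `u` is a (monic) monomial in the variables from `W`. -/
def IsMonomialIn (W : Finset V) (u : MvPolynomial V k) : Prop :=
  ∃ s : V →₀ ℕ, (s.support : Set V) ⊆ (W : Set V) ∧ u = monomial s 1

/-- `u` is a (monic) monomial. -/
def IsMonomial (u : MvPolynomial V k) : Prop := ∃ s : V →₀ ℕ, u = monomial s 1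

/-- Vertex splittable monomial ideals (in the polynomial ring on the variables of `W`). -/
inductive VertexSplittable : Finset V → Ideal (MvPolynomial V k) → Prop
  | gen (W : Finset V) (u : MvPolynomial V k) (hu : IsMonomialIn k W u) :
      VertexSplittable W (Ideal.span {u})
  | split (W : Finset V) (x : V) (hx : x ∈ W) (I₁ I₂ : Ideal (MvPolynomial V k))
      (h1 : VertexSplittable (W.erase x) I₁) (h2 : VertexSplittable (W.erase x) I₂)
      (hle : I₂ ≤ I₁) : VertexSplittable W (Ideal.span {X x} * I₁ + I₂)

/-- `u` is a minimal monomial generator of the monomial ideal `I`. -/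
def IsMinGen (I : Ideal (MvPolynomial V k)) (u : MvPolynomial V k) : Prop :=
  IsMonomial k u ∧ u ∈ I ∧
    ∀ v : MvPolynomial V k, IsMonomial k v → v ∣ u → v ≠ u → v ∉ I

/-- The colon ideal `(f₁,…,fᵢ) : (f_{i+1})` attached to position `i` of the list `L`. -/
noncomputable def colonIdeal (L : List (MvPolynomial V k)) (i : ℕ) :
    Ideal (MvPolynomial V k) :=
  Submodule.colon (Ideal.span {u | u ∈ L.take i}) (Ideal.span {L.getD i 0})

/-- `L` is an ordering of the minimal generators of `I` giving linear quotients. -/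
def IsLinearQuotientsOrder (I : Ideal (MvPolynomial V k))
    (L : List (MvPolynomial V k)) : Prop :=
  L.Nodup ∧ (∀ u, u ∈ L ↔ IsMinGen k I u) ∧
    ∀ i < L.length, ∃ S : Set V, colonIdeal k L i = Ideal.span (X '' S)

/-- `I` has linear quotients. -/
def HasLinearQuotients (I : Ideal (MvPolynomial V k)) : Prop :=
  ∃ L : List (MvPolynomial V k), IsLinearQuotientsOrder k I L

/-- `set(fᵢ)`: the set of variables belonging to the colon ideal at position `i`. -/
noncomputable def quotSet (L : List (MvPolynomial V k)) (i : ℕ) : Set V :=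
  {x : V | X x ∈ colonIdeal k L i}


section Betti

variable [Fintype V] [LinearOrder V]
variable (M : Type*) [AddCommGroup M] [Module (MvPolynomial V k) M]
  [Module k M] [IsScalarTower k (MvPolynomial V k) M]
  [SMulCommClass k (MvPolynomial V k) M]

/-- The Koszul differential (on the variables of the polynomial ring) acting on
`M`-valued alternating data, encoded as functions on finite vertex sets. -/
noncomputable def kosD (V) [DecidableEq V] [Fintype V] [LinearOrder V] {M} [AddCommGroup M] [Module (MvPolynomial V k) M]
  [Module k M] [IsScalarTower k (MvPolynomial V k) M]
  [SMulCommClass k (MvPolynomial V k) M] : (Finset V → M) →ₗ[k] (Finset V → M) where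
  toFun f T := ∑ x ∈ Finset.univ \ T,
    (((-1 : MvPolynomial V k) ^ (T.filter fun y => y < x).card) * X x) • f (insert x T)
  map_add' f g := by
    funext T
    simp [smul_add, Finset.sum_add_distrib]
  map_smul' c f := by
    funext T
    simp only [Pi.smul_apply, RingHom.id_apply, Finset.smul_sum]
    exact Finset.sum_congr rfl fun x _ => (smul_comm c _ _).symm

variable {M}

/-- The degree-`(j-i)` strand of `i`-chains of the Koszul complex tensored with a graded
module, the grading being given by the family `gr` of `k`-subspaces. -/
noncomputable def strand (gr : ℤ → Submodule k M) (i j : ℤ) :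
    Submodule k (Finset V → M) where
  carrier := {f | ∀ S : Finset V, f S ∈ gr (j - i) ∧ ((S.card : ℤ) ≠ i → f S = 0)}
  add_mem' := by
    intro a b ha hb S
    exact ⟨(gr _).add_mem (ha S).1 (hb S).1,
      fun h => by simp [Pi.add_apply, (ha S).2 h, (hb S).2 h]⟩
  zero_mem' := fun S => ⟨(gr _).zero_mem, fun _ => rfl⟩
  smul_mem' := by
    intro c f hf S
    exact ⟨(gr _).smul_mem c (hf S).1, fun h => by simp [Pi.smul_apply, (hf S).2 h]⟩

/-- The `(i,j)`-th graded Betti number `dim_k Tor_i(M,k)_j`, computed as the dimension of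
the `j`-th graded strand of the `i`-th homology of the Koszul complex tensored with `M`. -/
noncomputable def bettiAux (gr : ℤ → Submodule k M) (i j : ℤ) : ℕ :=
  Module.finrank k
    (↥(strand k gr i j ⊓ LinearMap.ker (kosD k V (M := M))) ⧸
      Submodule.comap (strand k gr i j ⊓ LinearMap.ker (kosD k V (M := M))).subtype
        (Submodule.map (kosD k V (M := M)) (strand k gr (i + 1) j)))

/-- The `d`-th graded piece of the polynomial ring (`0` for `d < 0`). -/
noncomputable def grR (d : ℤ) : Submodule k (MvPolynomial V k) :=
  if 0 ≤ d then homogeneousSubmodule V k d.toNat else ⊥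

/-- The graded Betti numbers `β_{i,j}(I)` of a (homogeneous) ideal `I`. -/
noncomputable def bettiIdeal (I : Ideal (MvPolynomial V k)) (i j : ℤ) : ℕ :=
  bettiAux (V := V) k (fun d => grR k d ⊓ I.restrictScalars k) i j

/-- The graded Betti numbers `β_{i,j}(R/I)` of the quotient by a (homogeneous) ideal. -/
noncomputable def bettiQuot (I : Ideal (MvPolynomial V k)) (i j : ℤ) : ℕ :=
  bettiAux (V := V) k (M := MvPolynomial V k ⧸ I)
    (fun d => (grR k d).map (Ideal.Quotient.mkₐ k I).toLinearMap) i j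

/-- The projective dimension `pd(R/I) = max{i : β_{i,j}(R/I) ≠ 0 for some j}`. -/
noncomputable def pdQuot (I : Ideal (MvPolynomial V k)) : ℕ :=
  sSup {i : ℕ | ∃ j : ℤ, bettiQuot k I (i : ℤ) j ≠ 0}

/-- The Castelnuovo–Mumford regularity `reg(R/I) = max{j - i : β_{i,j}(R/I) ≠ 0}`. -/
noncomputable def regQuot (I : Ideal (MvPolynomial V k)) : ℕ :=
  sSup {r : ℕ | ∃ i j : ℤ, bettiQuot k I i j ≠ 0 ∧ j - i = (r : ℤ)}

/-- The big height of the Stanley–Reisner ideal of `Δ` (on the full vertex set):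
the maximum of `|X ∖ F|` over the facets `F` of `Δ`. -/
noncomputable def bight (Δ : Set (Finset V)) : ℕ :=
  sSup {m : ℕ | ∃ F : Finset V, IsFacet Δ F ∧ m = (Finset.univ \ F).card}

end Betti


/-- The independence complex of a graph: faces are the independent sets. -/
def indComplex (G : SimpleGraph V) : Set (Finset V) :=
  {F : Finset V | ∀ u ∈ F, ∀ w ∈ F, ¬ G.Adj u w}

/-- The edge ideal `I(G) = (x_u x_w : {u,w} ∈ E(G))`. -/
noncomputable def edgeIdeal (G : SimpleGraph V) : Ideal (MvPolynomial V k) :=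
  Ideal.span {p : MvPolynomial V k | ∃ u w : V, G.Adj u w ∧ p = X u * X w}

/-- The vertex cover ideal (Alexander dual of the edge ideal)
`I(G)^∨ = ⋂_{{u,w} ∈ E(G)} (x_u, x_w)`. -/
noncomputable def coverIdeal (G : SimpleGraph V) : Ideal (MvPolynomial V k) :=
  sInf {J : Ideal (MvPolynomial V k) |
    ∃ u w : V, G.Adj u w ∧ J = Ideal.span {X u, X w}}

/-- Deleting a set `S` of vertices from `G` (the result is kept on the same vertex type;
the removed vertices become isolated). -/
def delVerts (G : SimpleGraph V) (S : Set V) : SimpleGraph V where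
  Adj u w := G.Adj u w ∧ u ∉ S ∧ w ∉ S
  symm := ⟨fun _ _ ⟨h, hu, hw⟩ => ⟨h.symm, hw, hu⟩⟩
  loopless := ⟨fun u ⟨h, _, _⟩ => G.irrefl h⟩

/-- The closed neighbourhood `N_G[v]`. -/
def closedNbhd (G : SimpleGraph V) (v : V) : Set V :=
  insert v {w : V | G.Adj v w}

/-- `G` has an induced cycle of length `n`. -/
def HasInducedCycle (G : SimpleGraph V) (n : ℕ) : Prop :=
  ∃ f : ZMod n → V, Function.Injective f ∧
    ∀ i j : ZMod n, G.Adj (f i) (f j) ↔ (j = i + 1 ∨ i = j + 1)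

/-- A graph is chordal if it has no induced cycle of length at least `4`. -/
def Chordal (G : SimpleGraph V) : Prop := ∀ n : ℕ, 4 ≤ n → ¬ HasInducedCycle G n

/-- A simplicial vertex: its neighbourhood induces a complete subgraph. -/
def IsSimplicialVertex (G : SimpleGraph V) (x : V) : Prop :=
  ∀ u w : V, G.Adj x u → G.Adj x w → u ≠ w → G.Adj u w

section CM

variable [Fintype V]

/-- The irrelevant maximal ideal `(x₁,…,xₙ)` of the polynomial ring. -/
noncomputable def varIdeal : Ideal (MvPolynomial V k) :=
  Ideal.span (Set.range (X : V → MvPolynomial V k))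

/-- The depth of a module over the polynomial ring w.r.t. the irrelevant maximal ideal:
the maximal length of a regular sequence consisting of elements of `(x₁,…,xₙ)`. -/
noncomputable def mdepth (M : Type*) [AddCommGroup M]
    [Module (MvPolynomial V k) M] : ℕ :=
  sSup {n : ℕ | ∃ rs : List (MvPolynomial V k), rs.length = n ∧
    (∀ r ∈ rs, r ∈ varIdeal k (V := V)) ∧ RingTheory.Sequence.IsRegular M rs}

/-- The (Krull) dimension of a module: the Krull dimension of `R/ann(M)`. -/
noncomputable def mdim (M : Type*) [AddCommGroup M]
    [Module (MvPolynomial V k) M] : WithBot (WithTop ℕ) :=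
  ringKrullDim (MvPolynomial V k ⧸ Module.annihilator (MvPolynomial V k) M)

/-- A Cohen–Macaulay module over the polynomial ring: depth = Krull dimension. -/
def IsCMmod (M : Type*) [AddCommGroup M] [Module (MvPolynomial V k) M] : Prop :=
  (mdepth (V := V) k M : WithBot (WithTop ℕ)) = mdim (V := V) k M

/-- `R/I` is a Cohen–Macaulay ring: depth = Krull dimension. -/
def IsCMQuot (I : Ideal (MvPolynomial V k)) : Prop :=
  (mdepth (V := V) k (MvPolynomial V k ⧸ I) : WithBot (WithTop ℕ)) =
    ringKrullDim (MvPolynomial V k ⧸ I)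

/-- The subquotient `B/A` of two ideals, as a module over the polynomial ring. -/
noncomputable abbrev subquot (A B : Ideal (MvPolynomial V k)) :=
  ↥B ⧸ Submodule.comap B.subtype A

/-- A homogeneous (graded) ideal of the polynomial ring. -/
def IsHomogIdeal (J : Ideal (MvPolynomial V k)) : Prop :=
  ∀ f ∈ J, ∀ d : ℕ, homogeneousComponent d f ∈ J

/-- `R/I` is sequentially Cohen–Macaulay: there is a filtration
`I = J₀ ⊂ J₁ ⊂ ⋯ ⊂ J_r = R` by homogeneous ideals (i.e. a filtration of `R/I` by graded
submodules `Jᵢ/I`) whose successive quotients `Jᵢ₊₁/Jᵢ` are Cohen–Macaulay of strictly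
increasing Krull dimensions. -/
def SeqCM (I : Ideal (MvPolynomial V k)) : Prop :=
  ∃ (r : ℕ) (J : Fin (r + 1) → Ideal (MvPolynomial V k)),
    J 0 = I ∧ J (Fin.last r) = ⊤ ∧ StrictMono J ∧
    (∀ i, IsHomogIdeal k (J i)) ∧
    (∀ i : Fin r, IsCMmod (V := V) k (subquot k (J i.castSucc) (J i.succ))) ∧
    StrictMono fun i : Fin r => mdim (V := V) k (subquot k (J i.castSucc) (J i.succ))

end CM

/-! An ideal `I` generated by monomials not involving `x` satisfies `I : (x) = I`, since a
monomial generator dividing `x·m` without involving `x` already divides `m`. So if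
`f = x g ∈ I₂` with `g ∈ I₁`, then `g ∈ I₂` and `f ∈ xI₂`; the other inclusion is `I₂ ⊆ I₁`. -/

theorem mem_span_monomial_image_of_X_mul_mem {σ R : Type*} [CommSemiring R]
    {S : Set (σ →₀ ℕ)} {i : σ} (hS : ∀ s ∈ S, s i = 0) {p : MvPolynomial σ R}
    (h : X i * p ∈ Ideal.span ((fun s => monomial s (1 : R)) '' S)) :
    p ∈ Ideal.span ((fun s => monomial s (1 : R)) '' S) := by
  classical
  rw [mem_ideal_span_monomial_image] at h ⊢
  intro m hm
  obtain ⟨s, hs, hsm⟩ := h (Finsupp.single i 1 + m) (by simpa using hm)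
  refine ⟨s, hs, fun j => ?_⟩
  by_cases hj : j = i
  · simp [hj, hS s hs]
  · simpa [Finsupp.single_apply, Ne.symm hj] using hsm j

omit [DecidableEq V] in
theorem eq_monomial_image_of_forall_not_X_dvd (x : V) {G : Set (MvPolynomial V k)}
    (hG : ∀ u ∈ G, IsMonomial k u ∧ ¬ X x ∣ u) :
    ∃ S : Set (V →₀ ℕ), (∀ s ∈ S, s x = 0) ∧ G = (fun s => monomial s (1 : k)) '' S := by
  refine ⟨{s | monomial s 1 ∈ G}, fun s hs => ?_, ?_⟩
  · simpa [X_dvd_monomial] using (hG _ hs).2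
  · ext u
    constructor
    · intro hu
      obtain ⟨s, rfl⟩ := (hG u hu).1
      exact ⟨s, hu, rfl⟩
    · rintro ⟨s, hs, rfl⟩
      exact hs

omit [DecidableEq V] in
theorem mem_of_X_mul_mem_of_span_not_X_dvd {x : V} {I : Ideal (MvPolynomial V k)}
    (hI : ∃ G : Set (MvPolynomial V k), I = Ideal.span G ∧
      ∀ u ∈ G, IsMonomial k u ∧ ¬ (X x ∣ u))
    {p : MvPolynomial V k} (h : X x * p ∈ I) : p ∈ I := by
  obtain ⟨G, rfl, hG⟩ := hI
  obtain ⟨S, hS, rfl⟩ := eq_monomial_image_of_forall_not_X_dvd k x hG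
  exact mem_span_monomial_image_of_X_mul_mem hS h

theorem xI1_inf_I2_eq_xI2_general
    {V : Type*} (k : Type*) [Field k]
    (x : V) (I₁ I₂ : Ideal (MvPolynomial V k))
    (hI₂ : ∃ G : Set (MvPolynomial V k), I₂ = Ideal.span G ∧
      ∀ u ∈ G, IsMonomial k u ∧ ¬ (X x ∣ u))
    (hle : I₂ ≤ I₁) :
    (Ideal.span {(X x : MvPolynomial V k)} * I₁) ⊓ I₂ =
      Ideal.span {(X x : MvPolynomial V k)} * I₂ := by
  refine le_antisymm (fun f hf => ?_) (le_inf (Ideal.mul_mono_right hle) Ideal.mul_le_right)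
  obtain ⟨hxI₁, hfI₂⟩ := Submodule.mem_inf.mp hf
  obtain ⟨g, -, rfl⟩ := Ideal.mem_span_singleton_mul.mp hxI₁
  exact Ideal.mul_mem_mul (Ideal.mem_span_singleton_self _)
    (mem_of_X_mul_mem_of_span_not_X_dvd k hI₂ hfI₂)

/-- If `I₁, I₂` are monomial ideals generated by monomials not
divisible by the variable `x` and `I₂ ⊆ I₁`, then `(xI₁) ∩ I₂ = xI₂`. -/
theorem xI1_inf_I2_eq_xI2
    {V : Type*} [Fintype V] [DecidableEq V] (k : Type*) [Field k]
    (x : V) (I₁ I₂ : Ideal (MvPolynomial V k))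
    (hI₁ : ∃ G : Set (MvPolynomial V k), I₁ = Ideal.span G ∧
      ∀ u ∈ G, IsMonomial k u ∧ ¬ (X x ∣ u))
    (hI₂ : ∃ G : Set (MvPolynomial V k), I₂ = Ideal.span G ∧
      ∀ u ∈ G, IsMonomial k u ∧ ¬ (X x ∣ u))
    (hle : I₂ ≤ I₁) :
    (Ideal.span {(X x : MvPolynomial V k)} * I₁) ⊓ I₂ =
      Ideal.span {(X x : MvPolynomial V k)} * I₂ :=
  xI1_inf_I2_eq_xI2_general k x I₁ I₂ hI₂ hle

end VD
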